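/- arXiv:1405.0809 — 2 statements merged into one kernel-verified Lean document; each statement's English description precedes it below -/
import Mathlib

section
/- The GK theory consisting of the single pure formula ¬A(¬p) ⊃ Kp has a GK model M, and in every GK model M of this theory, K(M) is the deductive closure of {p}. -/
/-
Whether a model satisfies `¬A¬p ⊃ Kp` depends only on the valuations of the `R_K`- and
`R_A`-successors of its actual world, so the `K`-successors may be replaced by any set of
valuations without changing `A(M)`. In a GK model `M` we have `¬p ∉ A(M)`: otherwise taking all
valuations as `K`-successors gives a model of the theory that knows only tautologies, strictly
less than `K(M) = A(M) ∋ ¬p`. So the theory forces `p ∈ K(M)`, hence `Th({p}) ⊆ K(M)`, and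
taking the valuations satisfying `p` as `K`-successors shows by minimality that `K(M) = Th({p})`.
The same bound `Th({p}) ⊆ K(M₁)` shows that the model whose `K`- and `A`-successors are the
valuations satisfying `p` is a GK model.
-/

namespace GKPaper

/-- Propositional formulas over atoms of type `α`. -/
inductive PForm (α : Type) : Type
  | bot : PForm α
  | atom : α → PForm α
  | neg : PForm α → PForm α
  | and : PForm α → PForm α → PForm α
  | or : PForm α → PForm α → PForm α

namespace PForm

def top {α : Type} : PForm α := neg bot

def imp {α : Type} (f g : PForm α) : PForm α := or (neg f) g

def eval {α : Type} (v : α → Prop) : PForm α → Prop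
  | bot => False
  | atom a => v a
  | neg f => ¬ eval v f
  | and f g => eval v f ∧ eval v g
  | or f g => eval v f ∨ eval v g

end PForm

/-- Classical propositional entailment. -/
def Entails {α : Type} (Γ : Set (PForm α)) (ψ : PForm α) : Prop :=
  ∀ v : α → Prop, (∀ φ ∈ Γ, φ.eval v) → ψ.eval v

/-- Propositional deductive closure. -/
def Th {α : Type} (Γ : Set (PForm α)) : Set (PForm α) := { ψ | Entails Γ ψ }

/-- GK formulas: propositional formulas with modalities K and A. -/
inductive GKForm (α : Type) : Type
  | bot : GKForm α
  | atom : α → GKForm α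
  | neg : GKForm α → GKForm α
  | and : GKForm α → GKForm α → GKForm α
  | or : GKForm α → GKForm α → GKForm α
  | K : GKForm α → GKForm α
  | A : GKForm α → GKForm α

def GKForm.imp {α : Type} (f g : GKForm α) : GKForm α := .or (.neg f) g

def PForm.toGK {α : Type} : PForm α → GKForm α
  | .bot => .bot
  | .atom a => .atom a
  | .neg f => .neg f.toGK
  | .and f g => .and f.toGK g.toGK
  | .or f g => .or f.toGK g.toGK

/-- A Kripke interpretation for the logic of GK. -/
structure Kripke (α : Type) where
  W : Type
  ne : Nonempty W
  pi : W → α → Prop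
  RK : W → W → Prop
  RA : W → W → Prop
  s : W

/-- Satisfaction of a GK formula at a world. -/
def Kripke.sat {α : Type} (M : Kripke α) : M.W → GKForm α → Prop
  | _, .bot => False
  | w, .atom a => M.pi w a
  | w, .neg f => ¬ M.sat w f
  | w, .and f g => M.sat w f ∧ M.sat w g
  | w, .or f g => M.sat w f ∨ M.sat w g
  | w, .K f => ∀ u, M.RK w u → M.sat u f
  | w, .A f => ∀ u, M.RA w u → M.sat u f

/-- K(M): the propositional formulas known in M. -/
def Kset {α : Type} (M : Kripke α) : Set (PForm α) :=
  { φ | M.sat M.s (.K φ.toGK) }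

/-- A(M): the propositional formulas assumed in M. -/
def Aset {α : Type} (M : Kripke α) : Set (PForm α) :=
  { φ | M.sat M.s (.A φ.toGK) }

def Kripke.models {α : Type} (M : Kripke α) (T : Set (GKForm α)) : Prop :=
  ∀ F ∈ T, M.sat M.s F

/-- GK model of a GK theory. -/
def GKModel {α : Type} (M : Kripke α) (T : Set (GKForm α)) : Prop :=
  M.models T ∧ Kset M = Aset M ∧
    ¬ ∃ M₁ : Kripke α, M₁.models T ∧ Aset M₁ = Aset M ∧ Kset M₁ ⊂ Kset M

/-- Pure GK formulas: Boolean combinations of K-atoms and A-atoms. -/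
inductive PGK (α : Type) : Type
  | bot : PGK α
  | Katom : PForm α → PGK α
  | Aatom : PForm α → PGK α
  | neg : PGK α → PGK α
  | and : PGK α → PGK α → PGK α
  | or : PGK α → PGK α → PGK α

def PGK.imp {α : Type} (f g : PGK α) : PGK α := .or (.neg f) g

def PGK.toGK {α : Type} : PGK α → GKForm α
  | .bot => .bot
  | .Katom φ => .K φ.toGK
  | .Aatom φ => .A φ.toGK
  | .neg f => .neg f.toGK
  | .and f g => .and f.toGK g.toGK
  | .or f g => .or f.toGK g.toGK

def Kripke.satP {α : Type} (M : Kripke α) (F : PGK α) : Prop := M.sat M.s F.toGK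

def Kripke.modelsP {α : Type} (M : Kripke α) (T : Set (PGK α)) : Prop :=
  ∀ F ∈ T, M.satP F

def GKModelP {α : Type} (M : Kripke α) (T : Set (PGK α)) : Prop :=
  M.modelsP T ∧ Kset M = Aset M ∧
    ¬ ∃ M₁ : Kripke α, M₁.modelsP T ∧ Aset M₁ = Aset M ∧ Kset M₁ ⊂ Kset M

def PGK.atomK {α : Type} : PGK α → Set (PForm α)
  | .bot => ∅
  | .Katom φ => {φ}
  | .Aatom _ => ∅
  | .neg f => f.atomK
  | .and f g => f.atomK ∪ g.atomK
  | .or f g => f.atomK ∪ g.atomK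

def PGK.atomA {α : Type} : PGK α → Set (PForm α)
  | .bot => ∅
  | .Katom _ => ∅
  | .Aatom φ => {φ}
  | .neg f => f.atomA
  | .and f g => f.atomA ∪ g.atomA
  | .or f g => f.atomA ∪ g.atomA

def AtomK {α : Type} (T : Set (PGK α)) : Set (PForm α) := ⋃ F ∈ T, F.atomK
def AtomA {α : Type} (T : Set (PGK α)) : Set (PForm α) := ⋃ F ∈ T, F.atomA

/-- Fresh atoms used in the translation: `k φ` for Kφ, `a φ` for Aφ,
    copies `pk p` (p^k), `pa p` (p^a), and witness copies `pkw ψ p` (p^{k_ψ}),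
    `paw ψ p` (p^{a_ψ}). -/
inductive XAtom (α : Type) : Type
  | k : PForm α → XAtom α
  | a : PForm α → XAtom α
  | pk : α → XAtom α
  | pa : α → XAtom α
  | pkw : PForm α → α → XAtom α
  | paw : PForm α → α → XAtom α

/-- tr_p: replace K-atoms and A-atoms by fresh atoms. -/
def PGK.trp {α : Type} : PGK α → PForm (XAtom α)
  | .bot => .bot
  | .Katom φ => .atom (.k φ)
  | .Aatom φ => .atom (.a φ)
  | .neg f => .neg f.trp
  | .and f g => .and f.trp g.trp
  | .or f g => .or f.trp g.trp

/-- `I` is a model of the formula Φ_T = tr_p(T) ∧ Φ_snd ∧ Φ^K_wit ∧ Φ^A_wit. -/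
def SatPhi {α : Type} (T : Set (PGK α)) (I : XAtom α → Prop) : Prop :=
  (∀ F ∈ T, (PGK.trp F).eval I) ∧
  (∀ φ ∈ AtomK T, I (.k φ) → φ.eval (fun p => I (.pk p))) ∧
  (∀ φ ∈ AtomA T, I (.a φ) → φ.eval (fun p => I (.pa p))) ∧
  (∀ ψ ∈ AtomK T, ¬ I (.k ψ) →
      ¬ ψ.eval (fun p => I (.pkw ψ p)) ∧
      ∀ φ ∈ AtomK T, I (.k φ) → φ.eval (fun p => I (.pkw ψ p))) ∧
  (∀ ψ ∈ AtomA T, ¬ I (.a ψ) →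
      ¬ ψ.eval (fun p => I (.paw ψ p)) ∧
      ∀ φ ∈ AtomA T, I (.a φ) → φ.eval (fun p => I (.paw ψ p)))

/-- Reiter defaults and default theories. -/
structure Default (α : Type) where
  pre : PForm α
  jus : List (PForm α)
  con : PForm α

structure DefaultTheory (α : Type) where
  W : Set (PForm α)
  D : Set (Default α)

/-- `G` contains W, is deductively closed, and closed under applicable defaults w.r.t. `S`. -/
def GammaClosed {α : Type} (Δ : DefaultTheory α) (S G : Set (PForm α)) : Prop :=
  Δ.W ⊆ G ∧ Th G = G ∧
    ∀ d ∈ Δ.D, d.pre ∈ G → (∀ ψ ∈ d.jus, PForm.neg ψ ∉ S) → d.con ∈ G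

/-- Γ(S): the smallest such set. -/
def Gamma {α : Type} (Δ : DefaultTheory α) (S : Set (PForm α)) : Set (PForm α) :=
  ⋂₀ { G | GammaClosed Δ S G }

def IsExtension {α : Type} (Δ : DefaultTheory α) (E : Set (PForm α)) : Prop :=
  Gamma Δ E = E

/-- Literals. -/
inductive Lit (α : Type) : Type
  | pos : α → Lit α
  | neg : α → Lit α

def Consistent {α : Type} (S : Set (Lit α)) : Prop :=
  ∀ a : α, ¬ (Lit.pos a ∈ S ∧ Lit.neg a ∈ S)

/-- Nested expressions. -/
inductive NExp (α : Type) : Type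
  | lit : Lit α → NExp α
  | top : NExp α
  | bot : NExp α
  | not : NExp α → NExp α
  | conj : NExp α → NExp α → NExp α
  | disj : NExp α → NExp α → NExp α

def NExp.sat {α : Type} (S : Set (Lit α)) : NExp α → Prop
  | .lit l => l ∈ S
  | .top => True
  | .bot => False
  | .not F => ¬ NExp.sat S F
  | .conj F G => NExp.sat S F ∧ NExp.sat S G
  | .disj F G => NExp.sat S F ∨ NExp.sat S G

def NExp.notFree {α : Type} : NExp α → Prop
  | .lit _ => True
  | .top => True
  | .bot => True
  | .not _ => False
  | .conj F G => F.notFree ∧ G.notFree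
  | .disj F G => F.notFree ∧ G.notFree

open Classical in
/-- The reduct of a nested expression w.r.t. `S`. -/
noncomputable def NExp.reduct {α : Type} (S : Set (Lit α)) : NExp α → NExp α
  | .lit l => .lit l
  | .top => .top
  | .bot => .bot
  | .not F => if NExp.sat S F then .bot else .top
  | .conj F G => .conj (F.reduct S) (G.reduct S)
  | .disj F G => .disj (F.reduct S) (G.reduct S)

structure Rule (α : Type) where
  head : NExp α
  body : NExp α

def SatProg {α : Type} (S : Set (Lit α)) (P : Set (Rule α)) : Prop :=
  ∀ r ∈ P, NExp.sat S r.body → NExp.sat S r.head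

/-- Answer sets of not-free programs: minimal consistent sets satisfying the program. -/
def IsAnswerSetNF {α : Type} (P : Set (Rule α)) (S : Set (Lit α)) : Prop :=
  Consistent S ∧ SatProg S P ∧
    ∀ S' : Set (Lit α), Consistent S' → SatProg S' P → S' ⊆ S → S' = S

noncomputable def ReductProg {α : Type} (S : Set (Lit α)) (P : Set (Rule α)) : Set (Rule α) :=
  (fun r => Rule.mk (r.head.reduct S) (r.body.reduct S)) '' P

def IsAnswerSet {α : Type} (P : Set (Rule α)) (S : Set (Lit α)) : Prop :=
  IsAnswerSetNF (ReductProg S P) S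

/-- Formulas in negation normal form. -/
inductive NNF (α : Type) : Type
  | top : NNF α
  | bot : NNF α
  | pos : α → NNF α
  | neg : α → NNF α
  | and : NNF α → NNF α → NNF α
  | or : NNF α → NNF α → NNF α

def NNF.eval {α : Type} (v : α → Prop) : NNF α → Prop
  | .top => True
  | .bot => False
  | .pos a => v a
  | .neg a => ¬ v a
  | .and f g => f.eval v ∧ g.eval v
  | .or f g => f.eval v ∨ g.eval v

/-- tr_ne: translate an NNF formula to a nested expression. -/
def NNF.toNExp {α : Type} : NNF α → NExp α
  | .top => .top
  | .bot => .bot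
  | .pos a => .lit (.pos a)
  | .neg a => .lit (.neg a)
  | .and f g => .conj f.toNExp g.toNExp
  | .or f g => .disj f.toNExp g.toNExp

/-- Autoepistemic formulas: propositional formulas with belief modality L. -/
inductive AEForm (α : Type) : Type
  | bot : AEForm α
  | atom : α → AEForm α
  | L : AEForm α → AEForm α
  | neg : AEForm α → AEForm α
  | and : AEForm α → AEForm α → AEForm α
  | or : AEForm α → AEForm α → AEForm α

def AEForm.imp {α : Type} (f g : AEForm α) : AEForm α := .or (.neg f) g

/-- Flatten an AE formula into a propositional formula treating L-atoms as fresh atoms. -/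
def AEForm.flatten {α : Type} : AEForm α → PForm (α ⊕ AEForm α)
  | .bot => .bot
  | .atom a => .atom (.inl a)
  | .L φ => .atom (.inr φ)
  | .neg f => .neg f.flatten
  | .and f g => .and f.flatten g.flatten
  | .or f g => .or f.flatten g.flatten

/-- Deductive closure in the modal language, treating L-atoms as atoms. -/
def ThAE {α : Type} (Γ : Set (AEForm α)) : Set (AEForm α) :=
  { ψ | Entails (AEForm.flatten '' Γ) ψ.flatten }

/-- Moore expansions. -/
def IsExpansion {α : Type} (A T : Set (AEForm α)) : Prop :=
  T = ThAE (A ∪ { F | ∃ φ ∈ T, F = AEForm.L φ } ∪ { F | ∃ φ ∉ T, F = AEForm.neg (AEForm.L φ) })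

def PForm.toAE {α : Type} : PForm α → AEForm α
  | .bot => .bot
  | .atom a => .atom a
  | .neg f => .neg f.toAE
  | .and f g => .and f.toAE g.toAE
  | .or f g => .or f.toAE g.toAE

/-- Disjunctive logic program rules. -/
structure DRule (α : Type) where
  head : List α
  pos : List α
  neg : List α

/-- `S'` satisfies the GL reduct of `P` w.r.t. `S`. -/
def SatDReduct {α : Type} (S' S : Set α) (P : Set (DRule α)) : Prop :=
  ∀ r ∈ P, (∀ a ∈ r.neg, a ∉ S) → (∀ a ∈ r.pos, a ∈ S') → ∃ a ∈ r.head, a ∈ S'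

def IsDAnswerSet {α : Type} (P : Set (DRule α)) (S : Set α) : Prop :=
  SatDReduct S S P ∧ ∀ S' ⊆ S, SatDReduct S' S P → S' = S

/-- The Lin–Zhou style translation of a disjunctive rule to a pure GK formula. -/
def DRule.toGK {α : Type} (r : DRule α) : PGK α :=
  PGK.imp
    (PGK.and
      (r.pos.foldr (fun a f => PGK.and (.Katom (.atom a)) f) (PGK.neg .bot))
      (r.neg.foldr (fun a f => PGK.and (.neg (.Aatom (.atom a))) f) (PGK.neg .bot)))
    (r.head.foldr (fun a f => PGK.or (.Katom (.atom a)) f) .bot)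

end GKPaper

namespace GKPaper

def theoryOf {α : Type} (P : Set (α → Prop)) : Set (PForm α) :=
  { φ | ∀ v ∈ P, φ.eval v }

lemma theoryOf_anti {α : Type} {P Q : Set (α → Prop)} (h : P ⊆ Q) :
    theoryOf Q ⊆ theoryOf P :=
  fun _ hφ v hv => hφ v (h hv)

lemma Th_singleton_atom {α : Type} (p : α) : Th {PForm.atom p} = theoryOf {v | v p} := by
  ext φ
  simp [Th, Entails, theoryOf, PForm.eval]

lemma atom_mem_theoryOf_iff {α : Type} (p : α) (P : Set (α → Prop)) :
    PForm.atom p ∈ theoryOf P ↔ P ⊆ {v | v p} :=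
  Iff.rfl

lemma neg_atom_not_mem_theoryOf {α : Type} (p : α) {P : Set (α → Prop)}
    (h : (fun _ => True) ∈ P) : PForm.neg (.atom p) ∉ theoryOf P :=
  fun hφ => hφ _ h trivial

lemma Kripke.sat_toGK {α : Type} (M : Kripke α) (w : M.W) (φ : PForm α) :
    M.sat w φ.toGK ↔ φ.eval (M.pi w) := by
  induction φ <;> simp [PForm.toGK, Kripke.sat, PForm.eval, *]

lemma Kset_eq_theoryOf {α : Type} (M : Kripke α) :
    Kset M = theoryOf (M.pi '' {u | M.RK M.s u}) := by
  ext φ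
  simp [Kset, Kripke.sat, Kripke.sat_toGK, theoryOf]

lemma Aset_eq_theoryOf {α : Type} (M : Kripke α) :
    Aset M = theoryOf (M.pi '' {u | M.RA M.s u}) := by
  ext φ
  simp [Aset, Kripke.sat, Kripke.sat_toGK, theoryOf]

def Kripke.ofValuations {α : Type} (P Q : Set (α → Prop)) : Kripke α where
  W := α → Prop
  ne := ⟨fun _ => True⟩
  pi := id
  RK := fun _ v => v ∈ P
  RA := fun _ v => v ∈ Q
  s := fun _ => True

lemma Kset_ofValuations {α : Type} (P Q : Set (α → Prop)) :
    Kset (Kripke.ofValuations P Q) = theoryOf P := by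
  simp [Kset_eq_theoryOf, Kripke.ofValuations]

lemma Aset_ofValuations {α : Type} (P Q : Set (α → Prop)) :
    Aset (Kripke.ofValuations P Q) = theoryOf Q := by
  simp [Aset_eq_theoryOf, Kripke.ofValuations]

def Kripke.withKnown {α : Type} (M : Kripke α) (P : Set (α → Prop)) : Kripke α :=
  Kripke.ofValuations P (M.pi '' {u | M.RA M.s u})

lemma Kset_withKnown {α : Type} (M : Kripke α) (P : Set (α → Prop)) :
    Kset (M.withKnown P) = theoryOf P :=
  Kset_ofValuations _ _

lemma Aset_withKnown {α : Type} (M : Kripke α) (P : Set (α → Prop)) :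
    Aset (M.withKnown P) = Aset M := by
  rw [Kripke.withKnown, Aset_ofValuations, Aset_eq_theoryOf]

lemma GKModel.Kset_eq_of_subset {α : Type} {T : Set (GKForm α)} {M N : Kripke α}
    (hM : GKModel M T) (hN : N.models T) (hA : Aset N = Aset M) (hK : Kset N ⊆ Kset M) :
    Kset N = Kset M := by
  by_contra hne
  exact hM.2.2 ⟨N, hN, hA, Set.ssubset_iff_subset_ne.2 ⟨hK, hne⟩⟩

/-- The GK encoding `¬A¬p ⊃ Kp` of Reiter's default `⊤ : p / p`. -/
def normalDefaultGK {α : Type} (p : α) : Set (GKForm α) :=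
  {GKForm.imp (.neg (.A (.neg (.atom p)))) (.K (.atom p))}

lemma models_normalDefaultGK_iff {α : Type} (p : α) (M : Kripke α) :
    M.models (normalDefaultGK p) ↔ PForm.neg (.atom p) ∈ Aset M ∨ PForm.atom p ∈ Kset M := by
  simp [normalDefaultGK, Kripke.models, GKForm.imp, Kripke.sat, Kset, Aset, PForm.toGK]

lemma models_normalDefaultGK_of_Kset {α : Type} (p : α) {M : Kripke α}
    (h : Kset M = theoryOf {v | v p}) : M.models (normalDefaultGK p) :=
  (models_normalDefaultGK_iff p M).2 (.inr (h ▸ (atom_mem_theoryOf_iff p _).2 subset_rfl))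

lemma Th_subset_Kset_of_models {α : Type} (p : α) {M : Kripke α}
    (hM : M.models (normalDefaultGK p)) (hA : PForm.neg (.atom p) ∉ Aset M) :
    Th {PForm.atom p} ⊆ Kset M := by
  have hp : PForm.atom p ∈ Kset M := ((models_normalDefaultGK_iff p M).1 hM).resolve_left hA
  rw [Kset_eq_theoryOf] at hp ⊢
  rw [Th_singleton_atom]
  exact theoryOf_anti ((atom_mem_theoryOf_iff p _).1 hp)

lemma GKModel_ofValuations_normalDefaultGK {α : Type} (p : α) :
    GKModel (Kripke.ofValuations {v | v p} {v | v p}) (normalDefaultGK p) := by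
  refine ⟨models_normalDefaultGK_of_Kset p (Kset_ofValuations _ _), ?_, ?_⟩
  · rw [Kset_ofValuations, Aset_ofValuations]
  · rintro ⟨N, hN, hA, hK⟩
    rw [Aset_ofValuations] at hA
    rw [Kset_ofValuations, ← Th_singleton_atom] at hK
    have hnA : PForm.neg (.atom p) ∉ Aset N := hA ▸ neg_atom_not_mem_theoryOf p trivial
    exact hK.2 (Th_subset_Kset_of_models p hN hnA)

lemma neg_atom_not_mem_Aset_of_GKModel {α : Type} (p : α) {M : Kripke α}
    (hM : GKModel M (normalDefaultGK p)) : PForm.neg (.atom p) ∉ Aset M := by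
  intro hnA
  have hK := hM.Kset_eq_of_subset (N := M.withKnown Set.univ)
    ((models_normalDefaultGK_iff p _).2 (.inl ((Aset_withKnown M _).symm ▸ hnA)))
    (Aset_withKnown M _)
    (by rw [Kset_withKnown, Kset_eq_theoryOf]; exact theoryOf_anti (Set.subset_univ _))
  rw [Kset_withKnown, hM.2.1] at hK
  exact neg_atom_not_mem_theoryOf p (Set.mem_univ _) (hK ▸ hnA)

lemma Kset_eq_Th_of_GKModel {α : Type} (p : α) {M : Kripke α}
    (hM : GKModel M (normalDefaultGK p)) : Kset M = Th {PForm.atom p} := by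
  have hTh := Th_subset_Kset_of_models p hM.1 (neg_atom_not_mem_Aset_of_GKModel p hM)
  rw [Th_singleton_atom] at hTh ⊢
  rw [← hM.Kset_eq_of_subset (models_normalDefaultGK_of_Kset p (Kset_withKnown M _))
    (Aset_withKnown M _) ((Kset_withKnown M _).symm ▸ hTh), Kset_withKnown]

end GKPaper

open GKPaper in
/-- the GK theory {¬A¬p ⊃ Kp} has a GK model, and in every GK model M
of it, K(M) = Th({p}). -/
theorem stmt3 {α : Type} (p : α) :
    (∃ M : Kripke α,
        GKModel M {GKForm.imp (.neg (.A (.neg (.atom p)))) (.K (.atom p))}) ∧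
    ∀ M : Kripke α,
        GKModel M {GKForm.imp (.neg (.A (.neg (.atom p)))) (.K (.atom p))} →
        Kset M = Th {PForm.atom p} :=
  ⟨⟨_, GKModel_ofValuations_normalDefaultGK p⟩, fun _ hM => Kset_eq_Th_of_GKModel p hM⟩
end

section
/- Deciding whether a pure GK theory has a GK model is Σ²ₚ-hard; specifically, there is a polynomial-time (indeed modular, rule-by-rule) reduction from the existence of an answer set of a disjunctive logic program to the existence of a GK model of a pure GK theory, mapping each rule p₁;…;p_k ← p_{k+1},…,p_l, not p_{l+1},…, not p_m to the pure GK formula Kp_{k+1} ∧ … ∧ Kp_l ∧ ¬Ap_{l+1} ∧ … ∧ ¬Ap_m ⊃ Kp₁ ∨ … ∨ Kp_k, such that the program has an answer set iff the resulting GK theory has a GK model. -/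
/-!
A translated rule holds in a Kripke interpretation `M` exactly when the atoms known in `M` satisfy
the Gelfond–Lifschitz reduct of the rule with respect to the atoms assumed in `M`. Since
`K(M) = A(M)` in a GK model, its known atoms `S` satisfy the reduct relative to themselves; a
smaller `S'` satisfying the reduct would give the interpretation that knows only the
consequences of `S'` and keeps the assumption worlds of `M`, contradicting minimality.
Conversely an answer set `S` gives the GK model that knows and assumes exactly the consequences
of `S`, and any less knowing model with the same assumptions would know a smaller set of atoms
satisfying the reduct.
-/

namespace GKPaper

variable {α : Type}

namespace Kripke

-- The valuation of the actual world plays no role for pure GK formulas.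
def ofVals (VK VA : Set (α → Prop)) : Kripke α where
  W := α → Prop
  ne := ⟨fun _ => False⟩
  pi := id
  RK := fun _ v => v ∈ VK
  RA := fun _ v => v ∈ VA
  s := fun _ => False

theorem sat_toGK_s17 (M : Kripke α) (w : M.W) (φ : PForm α) :
    M.sat w φ.toGK ↔ φ.eval (M.pi w) := by
  induction φ with
  | bot => exact Iff.rfl
  | atom a => exact Iff.rfl
  | neg f ih => exact not_congr ih
  | and f g ihf ihg => exact and_congr ihf ihg
  | or f g ihf ihg => exact or_congr ihf ihg

theorem satP_foldr_and (M : Kripke α) (f : α → PGK α) (l : List α) :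
    M.satP (l.foldr (fun a g => .and (f a) g) (.neg .bot)) ↔ ∀ a ∈ l, M.satP (f a) := by
  induction l with
  | nil => simp [satP, PGK.toGK, sat]
  | cons a l ih => rw [List.forall_mem_cons, ← ih]; exact Iff.rfl

theorem satP_foldr_or (M : Kripke α) (f : α → PGK α) (l : List α) :
    M.satP (l.foldr (fun a g => .or (f a) g) .bot) ↔ ∃ a ∈ l, M.satP (f a) := by
  induction l with
  | nil => simp [satP, PGK.toGK, sat]
  | cons a l ih => rw [List.exists_mem_cons_iff, ← ih]; exact Iff.rfl

end Kripke

open Kripke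

theorem mem_Kset_iff (M : Kripke α) (φ : PForm α) :
    φ ∈ Kset M ↔ ∀ u, M.RK M.s u → φ.eval (M.pi u) := by
  simp only [Kset, Set.mem_ofPred_eq, sat, sat_toGK_s17]

theorem mem_Aset_iff (M : Kripke α) (φ : PForm α) :
    φ ∈ Aset M ↔ ∀ u, M.RA M.s u → φ.eval (M.pi u) := by
  simp only [Aset, Set.mem_ofPred_eq, sat, sat_toGK_s17]

def knownAtoms (M : Kripke α) : Set α := {a | PForm.atom a ∈ Kset M}

def assumedAtoms (M : Kripke α) : Set α := {a | PForm.atom a ∈ Aset M}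

theorem satP_toGK_iff (M : Kripke α) (r : DRule α) :
    M.satP r.toGK ↔ ((∀ a ∈ r.neg, a ∉ assumedAtoms M) → (∀ a ∈ r.pos, a ∈ knownAtoms M) →
      ∃ a ∈ r.head, a ∈ knownAtoms M) := by
  have hK := satP_foldr_and M (fun a => .Katom (.atom a)) r.pos
  have hA := satP_foldr_and M (fun a => .neg (.Aatom (.atom a))) r.neg
  have hH := satP_foldr_or M (fun a => .Katom (.atom a)) r.head
  change (¬ (M.satP _ ∧ M.satP _) ∨ M.satP _) ↔ _
  rw [hK, hA, hH]
  change (¬ ((∀ a ∈ r.pos, a ∈ knownAtoms M) ∧ ∀ a ∈ r.neg, a ∉ assumedAtoms M) ∨ _) ↔ _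
  tauto

theorem modelsP_image_toGK_iff (M : Kripke α) (P : Set (DRule α)) :
    M.modelsP (DRule.toGK '' P) ↔ SatDReduct (knownAtoms M) (assumedAtoms M) P := by
  simp only [modelsP, Set.forall_mem_image, satP_toGK_iff, SatDReduct]

theorem knownAtoms_ofVals (S : Set α) (VA : Set (α → Prop)) :
    knownAtoms (ofVals {v | ∀ a ∈ S, v a} VA) = S := by
  ext a
  simp only [knownAtoms, Set.mem_ofPred_eq, mem_Kset_iff]
  exact ⟨fun h => h (· ∈ S) fun _ hb => hb, fun ha v hv => hv a ha⟩

theorem Kset_ofVals_subset {M : Kripke α} {S : Set α} (hS : S ⊆ knownAtoms M)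
    (VA : Set (α → Prop)) : Kset (ofVals {v | ∀ a ∈ S, v a} VA) ⊆ Kset M := by
  intro φ hφ
  rw [mem_Kset_iff] at hφ ⊢
  exact fun u hu => hφ (M.pi u) fun a ha => (mem_Kset_iff M _).1 (hS ha) u hu

theorem Aset_ofVals_pi_image (M : Kripke α) (VK : Set (α → Prop)) :
    Aset (ofVals VK (M.pi '' {u | M.RA M.s u})) = Aset M := by
  ext φ
  simp only [mem_Aset_iff]
  exact ⟨fun h u hu => h _ ⟨u, hu, rfl⟩, by rintro h _ ⟨u, hu, rfl⟩; exact h u hu⟩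

theorem knownAtoms_mono {M₁ M₂ : Kripke α} (h : Kset M₁ ⊆ Kset M₂) :
    knownAtoms M₁ ⊆ knownAtoms M₂ := fun _ ha => h ha

theorem GKModelP_ofVals_of_isDAnswerSet {P : Set (DRule α)} {S : Set α}
    (hS : IsDAnswerSet P S) :
    GKModelP (ofVals {v | ∀ a ∈ S, v a} {v | ∀ a ∈ S, v a}) (DRule.toGK '' P) := by
  set V : Set (α → Prop) := {v | ∀ a ∈ S, v a}
  have hKA : Kset (ofVals V V) = Aset (ofVals V V) := rfl
  have hknown : knownAtoms (ofVals V V) = S := knownAtoms_ofVals S V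
  have hassumed : assumedAtoms (ofVals V V) = S := hknown
  refine ⟨?_, hKA, ?_⟩
  · rw [modelsP_image_toGK_iff, hknown, hassumed]
    exact hS.1
  rintro ⟨M₁, hM₁, hA, hlt⟩
  have hassumed₁ : assumedAtoms M₁ = S := by rw [← hassumed, assumedAtoms, hA]; rfl
  rw [modelsP_image_toGK_iff, hassumed₁] at hM₁
  have hknown₁ : knownAtoms M₁ = S :=
    hS.2 _ (hknown ▸ knownAtoms_mono hlt.subset) hM₁
  exact hlt.not_subset (Kset_ofVals_subset hknown₁.ge V)

theorem isDAnswerSet_knownAtoms_of_GKModelP {P : Set (DRule α)} {M : Kripke α}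
    (hM : GKModelP M (DRule.toGK '' P)) : IsDAnswerSet P (knownAtoms M) := by
  obtain ⟨hmodels, hKA, hmin⟩ := hM
  have hassumed : assumedAtoms M = knownAtoms M := by rw [assumedAtoms, ← hKA]; rfl
  rw [modelsP_image_toGK_iff, hassumed] at hmodels
  refine ⟨hmodels, fun S' hS' hred => ?_⟩
  by_contra hne
  set M' := ofVals {v | ∀ a ∈ S', v a} (M.pi '' {u | M.RA M.s u})
  have hA : Aset M' = Aset M := Aset_ofVals_pi_image M _
  have hknown' : knownAtoms M' = S' := knownAtoms_ofVals S' _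
  have hassumed' : assumedAtoms M' = knownAtoms M := by
    rw [← hassumed, assumedAtoms, hA]; rfl
  refine hmin ⟨M', ?_, hA, Kset_ofVals_subset hS' _, fun hsup => hne ?_⟩
  · rw [modelsP_image_toGK_iff, hknown', hassumed']
    exact hred
  · exact hS'.antisymm (hknown' ▸ knownAtoms_mono hsup)

end GKPaper

open GKPaper in
/-- the rule-by-rule translation from disjunctive programs to pure GK
theories is a correct reduction: P has an answer set iff its translation has a GK model. -/
theorem stmt17 {α : Type} (P : Set (DRule α)) :
    (∃ S : Set α, IsDAnswerSet P S) ↔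
      ∃ M : Kripke α, GKModelP M (DRule.toGK '' P) :=
  ⟨fun ⟨_, hS⟩ => ⟨_, GKModelP_ofVals_of_isDAnswerSet hS⟩,
    fun ⟨_, hM⟩ => ⟨_, isDAnswerSet_knownAtoms_of_GKModelP hM⟩⟩
end
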